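/- arXiv:1112.4587 — 4 statements merged into one kernel-verified Lean document; each statement's English description precedes it below -/
import Mathlib

section
/- Let M be a 3×3 complex matrix satisfying M* J M = J, where J is the 3×3 matrix with entries J₁₃ = J₃₁ = i, J₂₂ = −i, and all other entries 0 (and M* denotes the conjugate transpose of M). Then det M has absolute value 1, and if det M = 1 then the characteristic polynomial of M satisfies det(M − τI) = −τ³ + τ²·tr(M) − τ·conj(tr(M)) + 1 for all τ ∈ ℂ. -/
open Complex Matrix

/-! Taking determinants in `Mᴴ J M = J` gives `|det M|² = 1`. Since `J` is invertible,
`M⁻¹ = J⁻¹ Mᴴ J`, so `tr M⁻¹ = tr Mᴴ = conj (tr M)`; when `det M = 1` the adjugate is `M⁻¹`,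
and the coefficients of a `3 × 3` characteristic polynomial are `tr M`, `tr (adj M)` and `det M`. -/

namespace Matrix

theorem det_sub_smul_one_fin_three {R : Type*} [CommRing R] (M : Matrix (Fin 3) (Fin 3) R)
    (τ : R) :
    (M - τ • (1 : Matrix (Fin 3) (Fin 3) R)).det
      = -τ ^ 3 + τ ^ 2 * M.trace - τ * M.adjugate.trace + M.det := by
  simp only [det_fin_three, trace_fin_three, adjugate_fin_three, sub_apply, smul_apply, of_apply,
    cons_val', cons_val_zero, cons_val_one, cons_val, cons_val_fin_one, one_apply_eq, one_apply_ne,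
    ne_eq, Fin.reduceEq, not_false_eq_true, smul_eq_mul, mul_one, mul_zero, sub_zero]
  ring

theorem adjugate_eq_inv_of_det_eq_one {n R : Type*} [Fintype n] [DecidableEq n] [CommRing R]
    {M : Matrix n n R} (hM : M.det = 1) : M.adjugate = M⁻¹ := by
  rw [inv_def, hM, Ring.inverse_one, one_smul]

variable {n : Type*} [Fintype n] [DecidableEq n]

theorem norm_det_eq_one_of_conjTranspose_mul_mul_self {𝕜 : Type*} [RCLike 𝕜]
    {M J : Matrix n n 𝕜} (hJ : J.det ≠ 0) (hM : Mᴴ * J * M = J) : ‖M.det‖ = 1 := by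
  have hdet : star M.det * M.det * J.det = 1 * J.det := by
    simpa only [det_mul, det_conjTranspose, one_mul, mul_right_comm] using congrArg det hM
  have hsq : (‖M.det‖ : 𝕜) ^ 2 = 1 := by
    rw [← RCLike.conj_mul]
    exact mul_right_cancel₀ hJ hdet
  exact (pow_eq_one_iff_of_nonneg (norm_nonneg _) two_ne_zero).mp (by exact_mod_cast hsq)

theorem trace_inv_eq_star_trace_of_conjTranspose_mul_mul_self {R : Type*} [Field R] [StarRing R]
    {M J : Matrix n n R} (hJ : IsUnit J.det) (hM : Mᴴ * J * M = J) :
    M⁻¹.trace = star M.trace := by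
  have hinv : M⁻¹ = J⁻¹ * Mᴴ * J := inv_eq_left_inv <| by
    rw [Matrix.mul_assoc, Matrix.mul_assoc, ← Matrix.mul_assoc Mᴴ, hM, nonsing_inv_mul J hJ]
  rw [hinv, trace_mul_cycle, mul_nonsing_inv J hJ, Matrix.one_mul, trace_conjTranspose]

end Matrix

theorem stmt_0 (M : Matrix (Fin 3) (Fin 3) ℂ)
    (J : Matrix (Fin 3) (Fin 3) ℂ)
    (hJ : J = !![0, 0, I; 0, -I, 0; I, 0, 0])
    (hM : Mᴴ * J * M = J) :
    ‖M.det‖ = 1 ∧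
      (M.det = 1 → ∀ τ : ℂ,
        (M - τ • (1 : Matrix (Fin 3) (Fin 3) ℂ)).det
          = -τ ^ 3 + τ ^ 2 * M.trace - τ * (starRingEnd ℂ) M.trace + 1) := by
  have hJdet : J.det ≠ 0 := by simp [hJ, det_fin_three]
  refine ⟨norm_det_eq_one_of_conjTranspose_mul_mul_self hJdet hM, fun hdet τ => ?_⟩
  rw [det_sub_smul_one_fin_three, adjugate_eq_inv_of_det_eq_one hdet,
    trace_inv_eq_star_trace_of_conjTranspose_mul_mul_self (isUnit_iff_ne_zero.mpr hJdet) hM, hdet]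
  rfl
end

section
/- Let τ₁, τ₂, τ₃ ∈ ℂ with τ₁τ₂τ₃ = 1 and with the set {τ₁, τ₂, τ₃} invariant under τ ↦ 1/conj(τ). If exactly one multiplier, say τ₁, lies on the unit circle, then there exists k ∈ ℂ with Im k ≠ 0 such that, after reordering, the multipliers are e^{ik}, e^{i·conj(k)}, and e^{−2i·Re(k)}. -/
/-!
The product condition forces `τ₂ ≠ 0`, and the reflection `1 / conj τ₂` has modulus
`1 / ‖τ₂‖ ≠ 1`, so it can be neither `τ₁` nor `τ₂`: hence `τ₃ = 1 / conj τ₂`. Writing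
`τ₂ = e^{ik}` with `k = -i log τ₂`, one has `1 / conj (e^{ik}) = e^{i conj k}`, the product
condition gives `τ₁ = e^{-2i Re k}`, and `|τ₂| = e^{-Im k} ≠ 1` gives `Im k ≠ 0`.
-/

open Complex ComplexConjugate

namespace Complex

theorem exists_exp_I_mul_eq {τ : ℂ} (hτ : τ ≠ 0) : ∃ k : ℂ, exp (I * k) = τ :=
  ⟨-I * log τ, by rw [← mul_assoc, mul_neg, I_mul_I, neg_neg, one_mul, exp_log hτ]⟩

theorem one_div_conj_exp_I_mul (k : ℂ) : 1 / conj (exp (I * k)) = exp (I * conj k) := by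
  rw [← exp_conj, map_mul, conj_I, one_div, ← exp_neg, neg_mul, neg_neg]

theorem exp_I_mul_mul_exp_I_mul_conj (k : ℂ) :
    exp (I * k) * exp (I * conj k) = exp (2 * I * (k.re : ℂ)) := by
  rw [← exp_add, ← mul_add, add_conj]
  push_cast
  ring_nf

theorem norm_exp_I_mul (k : ℂ) : ‖exp (I * k)‖ = Real.exp (-k.im) := by
  simp [norm_exp]

theorem norm_one_div_conj (z : ℂ) : ‖1 / conj z‖ = ‖z‖⁻¹ := by
  simp

end Complex

theorem norm_eq_one_of_one_div_conj_eq_self {b : ℂ} (hb : b ≠ 0) (h : 1 / conj b = b) :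
    ‖b‖ = 1 := by
  rw [div_eq_iff (by simpa using hb), mul_conj'] at h
  exact (pow_eq_one_iff_of_nonneg (norm_nonneg b) two_ne_zero).mp (by exact_mod_cast h.symm)

theorem eq_one_div_conj_of_mem_insert {a b c : ℂ} (ha : ‖a‖ = 1) (hb₀ : b ≠ 0) (hb : ‖b‖ ≠ 1)
    (hmem : 1 / conj b ∈ ({a, b, c} : Set ℂ)) : c = 1 / conj b := by
  rcases hmem with h | h | h
  · rw [← h, norm_one_div_conj, inv_eq_one] at ha
    exact absurd ha hb
  · exact absurd (norm_eq_one_of_one_div_conj_eq_self hb₀ h) hb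
  · exact h.symm

theorem stmt_3_general (τ₁ τ₂ τ₃ : ℂ) (hprod : τ₁ * τ₂ * τ₃ = 1)
    (hinv : ∀ τ ∈ ({τ₁, τ₂, τ₃} : Set ℂ), 1 / (starRingEnd ℂ) τ ∈ ({τ₁, τ₂, τ₃} : Set ℂ))
    (h1 : ‖τ₁‖ = 1) (h2 : ‖τ₂‖ ≠ 1) :
    ∃ k : ℂ, k.im ≠ 0 ∧
      ({τ₁, τ₂, τ₃} : Set ℂ)
        = ({Complex.exp (I * k), Complex.exp (I * (starRingEnd ℂ) k),
            Complex.exp (-2 * I * (k.re : ℂ))} : Set ℂ) := by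
  have hτ₂ : τ₂ ≠ 0 := by rintro rfl; simp at hprod
  obtain ⟨k, rfl⟩ := exists_exp_I_mul_eq hτ₂
  have hτ₃ : τ₃ = exp (I * conj k) := by
    rw [eq_one_div_conj_of_mem_insert h1 hτ₂ h2 (hinv _ (by simp)), one_div_conj_exp_I_mul]
  subst hτ₃
  have hτ₁ : τ₁ = exp (-2 * I * (k.re : ℂ)) := by
    rw [mul_assoc, exp_I_mul_mul_exp_I_mul_conj] at hprod
    rw [eq_inv_of_mul_eq_one_left hprod, ← exp_neg, neg_mul, neg_mul]
  have him : k.im ≠ 0 := by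
    intro h
    rw [norm_exp_I_mul, h, neg_zero, Real.exp_zero] at h2
    exact h2 rfl
  refine ⟨k, him, ?_⟩
  rw [hτ₁, Set.insert_comm, Set.pair_comm, Set.insert_comm]

theorem stmt_3 (τ₁ τ₂ τ₃ : ℂ) (hprod : τ₁ * τ₂ * τ₃ = 1)
    (hinv : ∀ τ ∈ ({τ₁, τ₂, τ₃} : Set ℂ), 1 / (starRingEnd ℂ) τ ∈ ({τ₁, τ₂, τ₃} : Set ℂ))
    (h1 : ‖τ₁‖ = 1) (h2 : ‖τ₂‖ ≠ 1) (h3 : ‖τ₃‖ ≠ 1) :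
    ∃ k : ℂ, k.im ≠ 0 ∧
      ({τ₁, τ₂, τ₃} : Set ℂ)
        = ({Complex.exp (I * k), Complex.exp (I * (starRingEnd ℂ) k),
            Complex.exp (-2 * I * (k.re : ℂ))} : Set ℂ) :=
  stmt_3_general τ₁ τ₂ τ₃ hprod hinv h1 h2
end

section
/- Let k₁ ∈ ℝ and k₂, k₃ ∈ ℂ with k₃ = conj(k₂) and Im k₂ ≠ 0, and suppose e^{i(k₁+k₂+k₃)} = 1. Then the quantity ρ = −64·sin²((k₁−k₂)/2)·sin²((k₁−k₃)/2)·sin²((k₂−k₃)/2) is real and strictly positive. -/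
/-!
Since `k₃ = conj k₂`, the middle factor is the conjugate of the first, and
`(k₂ - k₃) / 2 = i Im k₂`, so `sin ((k₂ - k₃) / 2) = i sinh (Im k₂)`. Hence
`ρ = 64 |sin ((k₁ - k₂) / 2)|⁴ sinh² (Im k₂)`, which is positive because neither sine
vanishes off the real axis.
-/

open Complex ComplexConjugate

namespace Complex

theorem sin_ne_zero_of_im_ne_zero {z : ℂ} (hz : z.im ≠ 0) : sin z ≠ 0 := by
  rw [Ne, sin_eq_zero_iff]
  rintro ⟨n, rfl⟩
  simp at hz

theorem sin_sub_conj_div_two (z : ℂ) :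
    sin ((z - conj z) / 2) = (Real.sinh z.im : ℂ) * I := by
  rw [ofReal_sinh, ← sin_mul_I, sub_conj]
  congr 1
  push_cast
  ring

theorem sin_conj_div_two_sub (x : ℝ) (z : ℂ) :
    sin ((x - conj z) / 2) = conj (sin ((x - z) / 2)) := by
  rw [← sin_conj, map_div₀, map_sub, conj_ofReal, map_ofNat]

theorem neg_sixtyfour_mul_sin_sq_eq_ofReal (x : ℝ) (z : ℂ) :
    -64 * sin ((x - z) / 2) ^ 2 * sin ((x - conj z) / 2) ^ 2 * sin ((z - conj z) / 2) ^ 2 =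
      ((64 * normSq (sin ((x - z) / 2)) ^ 2 * Real.sinh z.im ^ 2 : ℝ) : ℂ) := by
  rw [sin_conj_div_two_sub, sin_sub_conj_div_two]
  push_cast
  rw [← mul_conj]
  linear_combination (-64 * sin ((x - z) / 2) ^ 2 * conj (sin ((x - z) / 2)) ^ 2 *
    sinh (z.im : ℂ) ^ 2) * I_sq

end Complex

theorem stmt_7_general (k₁ : ℝ) (k₂ k₃ : ℂ) (hk₃ : k₃ = (starRingEnd ℂ) k₂) (him : k₂.im ≠ 0) :
    (( -64 * Complex.sin (((k₁ : ℂ) - k₂) / 2) ^ 2 * Complex.sin (((k₁ : ℂ) - k₃) / 2) ^ 2 *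
        Complex.sin ((k₂ - k₃) / 2) ^ 2).im = 0) ∧
    0 < ( -64 * Complex.sin (((k₁ : ℂ) - k₂) / 2) ^ 2 * Complex.sin (((k₁ : ℂ) - k₃) / 2) ^ 2 *
        Complex.sin ((k₂ - k₃) / 2) ^ 2).re := by
  subst hk₃
  rw [neg_sixtyfour_mul_sin_sq_eq_ofReal, ofReal_im, ofReal_re]
  refine ⟨rfl, ?_⟩
  have hsin : sin ((k₁ - k₂) / 2) ≠ 0 := sin_ne_zero_of_im_ne_zero (by simpa using him)
  have hsinh : Real.sinh k₂.im ≠ 0 := Real.sinh_ne_zero.mpr him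
  have hnormSq : 0 < normSq (sin ((k₁ - k₂) / 2)) := normSq_pos.mpr hsin
  positivity

theorem stmt_7 (k₁ : ℝ) (k₂ k₃ : ℂ) (hk₃ : k₃ = (starRingEnd ℂ) k₂) (him : k₂.im ≠ 0)
    (h : Complex.exp (I * ((k₁ : ℂ) + k₂ + k₃)) = 1) :
    (( -64 * Complex.sin (((k₁ : ℂ) - k₂) / 2) ^ 2 * Complex.sin (((k₁ : ℂ) - k₃) / 2) ^ 2 *
        Complex.sin ((k₂ - k₃) / 2) ^ 2).im = 0) ∧
    0 < ( -64 * Complex.sin (((k₁ : ℂ) - k₂) / 2) ^ 2 * Complex.sin (((k₁ : ℂ) - k₃) / 2) ^ 2 *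
        Complex.sin ((k₂ - k₃) / 2) ^ 2).re :=
  stmt_7_general k₁ k₂ k₃ hk₃ him
end

section
/- Let M(t) be a differentiable 3×3 complex matrix-valued function on ℝ satisfying M'(t) = (P + Q(t))·M(t) with M(0) = I, where P = [[0,1,0],[0,0,1],[−iλ,0,0]] with λ ∈ ℝ, and Q(t) = [[0,0,0],[−p(t),0,0],[i·q(t),−p(t),0]] with p, q real-valued. Let J = [[0,0,i],[0,−i,0],[i,0,0]]. Then M(t)* J M(t) = J for all t ∈ ℝ. -/
/-!
If `M' = A M` and `Aᴴ J + J A = 0`, then `(Mᴴ J M)' = Mᴴ (Aᴴ J + J A) M = 0`, so `Mᴴ J M` stays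
equal to its value `J` at `t = 0`. For `A = P + Q t`, since `Jᴴ = -J`, the identity `Aᴴ J + J A = 0` says that
`J A = [[λ - q, -i p, 0], [i p, 0, -i], [0, i, 0]]` is Hermitian, which holds because `λ`, `p`, `q`
are real.
-/

open Complex Matrix

namespace Matrix

variable {n 𝕜 : Type*} [Fintype n] [RCLike 𝕜]

theorem hasDerivAt_conjTranspose_mul_mul_apply {M : ℝ → Matrix n n 𝕜} {D : Matrix n n 𝕜}
    (J : Matrix n n 𝕜) {t : ℝ} (hM : ∀ i j, HasDerivAt (fun s => M s i j) (D i j) t) (i j : n) :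
    HasDerivAt (fun s => ((M s)ᴴ * J * M s) i j) ((Dᴴ * J * M t + (M t)ᴴ * J * D) i j) t := by
  simp only [mul_apply, add_apply, conjTranspose_apply, Finset.sum_mul, ← Finset.sum_add_distrib]
  refine HasDerivAt.fun_sum fun l _ => HasDerivAt.fun_sum fun k _ => ?_
  exact (((hM k i).star).mul_const (J k l)).fun_mul (hM l j)

theorem conjTranspose_mul_mul_eq_of_hasDerivAt {A M : ℝ → Matrix n n 𝕜} {J : Matrix n n 𝕜}
    (hA : ∀ t, (A t)ᴴ * J + J * A t = 0)
    (hM : ∀ t i j, HasDerivAt (fun s => M s i j) ((A t * M t) i j) t) (s t : ℝ) :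
    (M s)ᴴ * J * M s = (M t)ᴴ * J * M t := by
  have hderiv : ∀ u i j, HasDerivAt (fun s => ((M s)ᴴ * J * M s) i j) 0 u := by
    intro u i j
    have hzero : (A u * M u)ᴴ * J * M u + (M u)ᴴ * J * (A u * M u) = 0 := by
      rw [conjTranspose_mul, ← zero_mul (M u), ← mul_zero (M u)ᴴ, ← hA u]
      simp only [mul_add, add_mul, Matrix.mul_assoc]
    have := hasDerivAt_conjTranspose_mul_mul_apply J (hM u) i j
    rwa [hzero] at this
  ext i j
  exact is_const_of_deriv_eq_zero (fun u => (hderiv u i j).differentiableAt)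
    (fun u => (hderiv u i j).deriv) s t

end Matrix

theorem thirdOrder_generator_conjTranspose_mul_add_mul_eq_zero (lam a b : ℝ) :
    (!![0, 1, 0; 0, 0, 1; -I * (lam : ℂ), 0, 0] +
        !![0, 0, 0; -(a : ℂ), 0, 0; I * (b : ℂ), -(a : ℂ), 0])ᴴ * !![0, 0, I; 0, -I, 0; I, 0, 0] +
      !![0, 0, I; 0, -I, 0; I, 0, 0] * (!![0, 1, 0; 0, 0, 1; -I * (lam : ℂ), 0, 0] +
        !![0, 0, 0; -(a : ℂ), 0, 0; I * (b : ℂ), -(a : ℂ), 0]) = 0 := by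
  ext i j
  fin_cases i <;> fin_cases j <;> simp [mul_apply, Fin.sum_univ_three] <;> ring

theorem stmt_14 (lam : ℝ) (p q : ℝ → ℝ)
    (P : Matrix (Fin 3) (Fin 3) ℂ)
    (hP : P = !![0, 1, 0; 0, 0, 1; -I * (lam : ℂ), 0, 0])
    (Q : ℝ → Matrix (Fin 3) (Fin 3) ℂ)
    (hQ : ∀ t : ℝ, Q t = !![0, 0, 0; -(p t : ℂ), 0, 0; I * (q t : ℂ), -(p t : ℂ), 0])
    (J : Matrix (Fin 3) (Fin 3) ℂ)
    (hJ : J = !![0, 0, I; 0, -I, 0; I, 0, 0])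
    (M : ℝ → Matrix (Fin 3) (Fin 3) ℂ)
    (hM : ∀ t : ℝ, ∀ i j : Fin 3,
      HasDerivAt (fun s => M s i j) (((P + Q t) * M t) i j) t)
    (hM0 : M 0 = 1) :
    ∀ t : ℝ, (M t)ᴴ * J * M t = J := by
  have hskew : ∀ t, (P + Q t)ᴴ * J + J * (P + Q t) = 0 := fun t => by
    rw [hP, hQ t, hJ]
    exact thirdOrder_generator_conjTranspose_mul_add_mul_eq_zero lam (p t) (q t)
  intro t
  rw [conjTranspose_mul_mul_eq_of_hasDerivAt hskew hM t 0, hM0, conjTranspose_one,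
    Matrix.one_mul, Matrix.mul_one]
end
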